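/- Let n ∈ ℕ with n ≥ 1, let ξ_1, …, ξ_n be positive reals, let a > 0, and let λ > 0 satisfy Σ_{i=1}^n max(1/λ − 1/ξ_i, 0) = a². Set p_i = max(1/λ − 1/ξ_i, 0). Then for every choice of nonnegative reals q_1, …, q_n with Σ_{i=1}^n q_i ≤ a², we have Σ_{i=1}^n log(q_i ξ_i + 1) ≤ Σ_{i=1}^n log(p_i ξ_i + 1). -/

import Mathlib

/-!
The objective `∑ log (q i * ξ i + 1)` is concave in `q`, so it lies below its tangent plane at
the water-filling point `p`. The slope of that plane in coordinate `i` is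
`ξ i / (p i * ξ i + 1)`, which equals `λ` where `p i > 0` and is at most `λ` where `p i = 0`
(the KKT conditions). Hence the objective at `q` exceeds its value at `p` by at most
`λ * (∑ q - ∑ p) ≤ 0`.
-/

open Real Finset

/-- The water-filling allocation to a channel of gain `x` at water level `1 / l`. -/
noncomputable def waterFill (l x : ℝ) : ℝ := max (1 / l - 1 / x) 0

lemma waterFill_nonneg (l x : ℝ) : 0 ≤ waterFill l x := le_max_right _ _

lemma log_le_log_add_div_sub {x y : ℝ} (hx : 0 < x) (hy : 0 < y) :
    log x ≤ log y + (x - y) / y := by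
  have h := log_le_sub_one_of_pos (div_pos hx hy)
  rw [log_div hx.ne' hy.ne', div_sub_one hy.ne'] at h
  linarith

lemma sub_mul_div_waterFill_le {l x q : ℝ} (hl : 0 < l) (hx : 0 < x) (hq : 0 ≤ q) :
    (q - waterFill l x) * x / (waterFill l x * x + 1) ≤ l * (q - waterFill l x) := by
  rcases le_or_gt (1 / l - 1 / x) 0 with hdry | hwet
  · have hp : waterFill l x = 0 := max_eq_right hdry
    have hxl : x ≤ l := le_of_one_div_le_one_div hl (by linarith)
    rw [hp]
    simpa [mul_comm l q] using mul_le_mul_of_nonneg_left hxl hq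
  · have hp : waterFill l x = 1 / l - 1 / x := max_eq_left hwet.le
    have hlevel : waterFill l x * x + 1 = x / l := by
      rw [hp]; field_simp; ring
    rw [hlevel]
    exact le_of_eq (by field_simp)

lemma log_mul_add_one_le_waterFill {l x q : ℝ} (hl : 0 < l) (hx : 0 < x) (hq : 0 ≤ q) :
    log (q * x + 1) ≤ log (waterFill l x * x + 1) + l * (q - waterFill l x) := by
  have hslope := sub_mul_div_waterFill_le hl hx hq
  set p := waterFill l x
  have hpos : 0 < p * x + 1 := by
    have := mul_nonneg (waterFill_nonneg l x) hx.le; linarith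
  calc log (q * x + 1)
      ≤ log (p * x + 1) + (q * x + 1 - (p * x + 1)) / (p * x + 1) :=
        log_le_log_add_div_sub (by positivity) hpos
    _ = log (p * x + 1) + (q - p) * x / (p * x + 1) := by ring
    _ ≤ log (p * x + 1) + l * (q - p) := by gcongr

theorem sum_log_mul_add_one_le_waterFill {ι : Type*} (s : Finset ι) {l : ℝ} (hl : 0 < l)
    {ξ q : ι → ℝ} (hξ : ∀ i ∈ s, 0 < ξ i) (hq : ∀ i ∈ s, 0 ≤ q i)
    (hbudget : ∑ i ∈ s, q i ≤ ∑ i ∈ s, waterFill l (ξ i)) :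
    ∑ i ∈ s, log (q i * ξ i + 1) ≤ ∑ i ∈ s, log (waterFill l (ξ i) * ξ i + 1) :=
  calc ∑ i ∈ s, log (q i * ξ i + 1)
      ≤ ∑ i ∈ s, (log (waterFill l (ξ i) * ξ i + 1) + l * (q i - waterFill l (ξ i))) :=
        sum_le_sum fun i hi => log_mul_add_one_le_waterFill hl (hξ i hi) (hq i hi)
    _ = ∑ i ∈ s, log (waterFill l (ξ i) * ξ i + 1)
          + l * (∑ i ∈ s, q i - ∑ i ∈ s, waterFill l (ξ i)) := by
        rw [sum_add_distrib, ← sum_sub_distrib, ← mul_sum]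
    _ ≤ ∑ i ∈ s, log (waterFill l (ξ i) * ξ i + 1) := by
        have : l * (∑ i ∈ s, q i - ∑ i ∈ s, waterFill l (ξ i)) ≤ 0 :=
          mul_nonpos_of_nonneg_of_nonpos hl.le (by linarith)
        linarith

theorem stmt12_general (n : ℕ) (ξ : Fin n → ℝ) (hξ : ∀ i, 0 < ξ i)
    (a : ℝ) (l : ℝ) (hl : 0 < l)
    (hsum : ∑ i, max (1 / l - 1 / ξ i) 0 = a ^ 2)
    (p : Fin n → ℝ) (hp : ∀ i, p i = max (1 / l - 1 / ξ i) 0) :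
    ∀ q : Fin n → ℝ, (∀ i, 0 ≤ q i) → (∑ i, q i ≤ a ^ 2) →
      ∑ i, Real.log (q i * ξ i + 1) ≤ ∑ i, Real.log (p i * ξ i + 1) := by
  intro q hq hqsum
  obtain rfl : p = fun i => waterFill l (ξ i) := funext hp
  exact sum_log_mul_add_one_le_waterFill univ hl (fun i _ => hξ i) (fun i _ => hq i)
    (hqsum.trans_eq hsum.symm)

/-- Water-filling optimality: if `λ > 0` satisfies `∑ i, max (1/λ - 1/ξ i) 0 = a²`
and `p i = max (1/λ - 1/ξ i) 0`, then for every nonnegative allocation `q` with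
`∑ i, q i ≤ a²` we have `∑ i, log (q i * ξ i + 1) ≤ ∑ i, log (p i * ξ i + 1)`. -/
theorem stmt12 (n : ℕ) (hn : 1 ≤ n) (ξ : Fin n → ℝ) (hξ : ∀ i, 0 < ξ i)
    (a : ℝ) (ha : 0 < a) (l : ℝ) (hl : 0 < l)
    (hsum : ∑ i, max (1 / l - 1 / ξ i) 0 = a ^ 2)
    (p : Fin n → ℝ) (hp : ∀ i, p i = max (1 / l - 1 / ξ i) 0) :
    ∀ q : Fin n → ℝ, (∀ i, 0 ≤ q i) → (∑ i, q i ≤ a ^ 2) →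
      ∑ i, Real.log (q i * ξ i + 1) ≤ ∑ i, Real.log (p i * ξ i + 1) :=
  stmt12_general n ξ hξ a l hl hsum p hp
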